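/- Mertens' second theorem: there exists a constant B such that ∑_{p ≤ x, p prime} 1/p = log log x + B + O(1/log x) as x → ∞. -/

import Mathlib

open Filter Finset

noncomputable def mP (n : ℕ) : Finset ℕ := (Finset.range (n+1)).filter Nat.Prime
noncomputable def mV (n p : ℕ) : ℕ := ∑ i ∈ Finset.Ico 1 (n+1), n / p ^ i

theorem mP_eq (n : ℕ) : mP n = (n.factorial).factorization.support := by
  ext p
  rw [Nat.support_factorization, Nat.mem_primeFactors, mP, mem_filter, mem_range,
    Nat.lt_succ_iff]
  constructor
  · rintro ⟨h1, h2⟩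
    exact ⟨h2, (Nat.Prime.dvd_factorial h2).2 h1, n.factorial_ne_zero⟩
  · rintro ⟨h2, hd, -⟩
    exact ⟨(Nat.Prime.dvd_factorial h2).1 hd, h2⟩

theorem mLegendre (n : ℕ) :
    Real.log (n.factorial) = ∑ p ∈ mP n, (mV n p : ℝ) * Real.log p := by
  have h : (n.factorial : ℕ) = ∏ p ∈ mP n, p ^ mV n p := by
    conv_lhs => rw [← Nat.factorization_prod_pow_eq_self n.factorial_ne_zero]
    rw [Nat.prod_factorization_eq_prod_primeFactors]
    rw [mP_eq, Nat.support_factorization]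
    refine Finset.prod_congr rfl fun p hp => ?_
    rw [Nat.mem_primeFactors] at hp
    haveI : Fact p.Prime := ⟨hp.1⟩
    congr 1
    rw [Nat.factorization_def _ hp.1]
    exact padicValNat_factorial (Nat.lt_succ_of_le (Nat.log_le_self p n))
  rw [h]
  push_cast
  rw [Real.log_prod]
  · refine Finset.sum_congr rfl fun p hp => ?_
    rw [Real.log_pow]
  · intro p hp
    have h2 : p.Prime := (mem_filter.mp hp).2
    have := h2.pos
    positivity

theorem mTheta_le (n : ℕ) : ∑ p ∈ mP n, Real.log p ≤ n * Real.log 4 := by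
  have h1 : (primorial n : ℝ) = ∏ p ∈ mP n, (p : ℝ) := by
    rw [primorial]; push_cast; rfl
  have h2 : ∑ p ∈ mP n, Real.log p = Real.log (primorial n) := by
    rw [h1, Real.log_prod]
    intro p hp
    have h2 : p.Prime := (mem_filter.mp hp).2
    have := h2.pos
    positivity
  rw [h2]
  calc Real.log (primorial n) ≤ Real.log (4 ^ n) := by
        apply Real.log_le_log (by exact_mod_cast primorial_pos n)
        exact_mod_cast primorial_le_4_pow n
    _ = n * Real.log 4 := by rw [Real.log_pow]

theorem log_factorial_le (n : ℕ) : Real.log n.factorial ≤ n * Real.log n := by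
  calc Real.log n.factorial ≤ Real.log (n ^ n) := by
        rcases Nat.eq_zero_or_pos n with h | h
        · simp [h]
        apply Real.log_le_log (by positivity)
        exact_mod_cast Nat.factorial_le_pow n
    _ = n * Real.log n := by rw [Real.log_pow]

theorem le_log_factorial (n : ℕ) (hn : 1 ≤ n) :
    n * Real.log n - n + 1 ≤ Real.log n.factorial := by
  induction n with
  | zero => omega
  | succ m ih =>
    rcases Nat.eq_zero_or_pos m with h | h
    · subst h; norm_num
    have hm1 : (1:ℝ) ≤ m := by exact_mod_cast h
    have hfact : Real.log ((m+1).factorial) = Real.log (m+1) + Real.log m.factorial := by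
      rw [Nat.factorial_succ]
      push_cast
      rw [Real.log_mul (by positivity) (by positivity)]
    have hlog : Real.log ((m:ℝ)+1) - Real.log m ≤ 1/m := by
      rw [← Real.log_div (by positivity) (by positivity)]
      have := Real.log_le_sub_one_of_pos (x := ((m:ℝ)+1)/m) (by positivity)
      have hne : (m:ℝ) ≠ 0 := by positivity
      calc Real.log (((m:ℝ)+1)/m) ≤ ((m:ℝ)+1)/m - 1 := this
        _ = 1/m := by field_simp; ring
    have ihm := ih h
    push_cast
    push_cast at ihm
    rw [hfact]
    have hmul : (m:ℝ) * Real.log (m+1) - m * Real.log m ≤ 1 := by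
      have := mul_le_mul_of_nonneg_left hlog (by positivity : (0:ℝ) ≤ m)
      rw [mul_sub] at this
      calc (m:ℝ) * Real.log (m+1) - m * Real.log m ≤ m * (1/m) := this
        _ = 1 := by field_simp
    nlinarith [ihm]

theorem mV_lower (n p : ℕ) (hp : p ∈ mP n) : (n : ℝ)/p - 1 ≤ mV n p := by
  have hpp : p.Prime := (mem_filter.mp hp).2
  have hpn : p ≤ n := Nat.lt_succ_iff.mp (mem_range.mp (mem_filter.mp hp).1)
  have hn1 : 1 ≤ n := le_trans hpp.one_lt.le hpn
  have h1 : n / p ≤ mV n p := by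
    rw [mV]
    have : 1 ∈ Finset.Ico 1 (n+1) := Finset.mem_Ico.mpr ⟨le_refl 1, by omega⟩
    calc n / p = n / p ^ 1 := by rw [pow_one]
      _ ≤ _ := Finset.single_le_sum (f := fun i => n / p ^ i) (fun i _ => Nat.zero_le _) this
  have h2 : (n : ℝ)/p - 1 ≤ (n / p : ℕ) := by
    have hmod := Nat.div_add_mod n p
    have hlt : n % p < p := Nat.mod_lt _ hpp.pos
    have hppos : (0:ℝ) < p := by exact_mod_cast hpp.pos
    rw [div_sub_one (ne_of_gt hppos), div_le_iff₀ hppos]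
    push_cast
    have : (p:ℝ) * (n/p : ℕ) + (n % p : ℕ) = n := by exact_mod_cast hmod
    have : ((n % p : ℕ) : ℝ) < p := by exact_mod_cast hlt
    nlinarith [this]
  calc (n : ℝ)/p - 1 ≤ (n / p : ℕ) := h2
    _ ≤ mV n p := by exact_mod_cast h1

theorem mV_upper (n p : ℕ) (hpp : p.Prime) :
    (mV n p : ℝ) ≤ n/p + 2*n/p^2 := by
  have hp2 : 2 ≤ p := hpp.two_le
  have h1 : mV n p + n = ∑ i ∈ Finset.range (n+1), n / p ^ i := by
    rw [mV, Finset.range_eq_Ico, Finset.sum_eq_sum_Ico_succ_bot (by omega : 0 < n+1)]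
    simp [add_comm]
  have h2 : mV n p + n ≤ n * p / (p - 1) := h1 ▸ Nat.geom_sum_le hp2 n (n+1)
  have h3 : ((n * p / (p-1) : ℕ) : ℝ) ≤ (n*p : ℕ)/((p-1 : ℕ) : ℝ) := Nat.cast_div_le
  have hp1 : (1:ℝ) ≤ (p:ℝ) - 1 := by
    have : (2:ℝ) ≤ p := by exact_mod_cast hp2
    linarith
  have hcast : ((p-1 : ℕ) : ℝ) = (p:ℝ) - 1 := by
    have : 1 ≤ p := by omega
    push_cast [this]; ring
  have h4 : (mV n p : ℝ) + n ≤ (n:ℝ)*p/((p:ℝ)-1) := by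
    calc (mV n p : ℝ) + n = ((mV n p + n : ℕ) : ℝ) := by push_cast; ring
      _ ≤ ((n * p / (p-1) : ℕ) : ℝ) := by exact_mod_cast h2
      _ ≤ (n*p : ℕ)/((p-1 : ℕ) : ℝ) := h3
      _ = (n:ℝ)*p/((p:ℝ)-1) := by rw [hcast]; push_cast; ring
  have hppos : (0:ℝ) < p := by positivity
  have hp2r : (2:ℝ) ≤ p := by exact_mod_cast hp2
  have key : (n:ℝ)*p/((p:ℝ)-1) - n ≤ n/p + 2*n/p^2 := by
    rw [div_sub' (by linarith : (p:ℝ)-1 ≠ 0)]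
    have hn0 : (0:ℝ) ≤ n := Nat.cast_nonneg n
    rw [div_add_div _ _ (by positivity) (by positivity : (p:ℝ)^2 ≠ 0), div_le_div_iff₀ (by linarith) (by positivity)]
    nlinarith [hn0, hp2r, mul_nonneg hn0 (mul_nonneg hppos.le (by linarith : (0:ℝ) ≤ (p:ℝ)-2)), sq_nonneg ((p:ℝ))]
  linarith [h4, key]

theorem sqrt_telescope (k : ℕ) (hk : 1 ≤ k) :
    1/((k:ℝ) * Real.sqrt k) ≤ 4 * (1/Real.sqrt k - 1/Real.sqrt (k+1)) := by
  set a := Real.sqrt k with ha_def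
  set b := Real.sqrt (k+1) with hb_def
  have hk1 : (1:ℝ) ≤ k := by exact_mod_cast hk
  have ha2 : a^2 = k := Real.sq_sqrt (by linarith)
  have hb2 : b^2 = (k:ℝ)+1 := by
    rw [hb_def]
    rw [show ((k:ℕ)+1 : ℝ) = ((k:ℝ)+1) by push_cast; ring] -- may be defeq
    exact Real.sq_sqrt (by linarith)
  have ha : 0 < a := Real.sqrt_pos.mpr (by linarith)
  have hb : 0 < b := Real.sqrt_pos.mpr (by linarith)
  have hab : a ≤ b := Real.sqrt_le_sqrt (by push_cast; linarith)
  have hba : b^2 ≤ 2*a^2 := by rw [ha2, hb2]; linarith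
  have hdiff : (b-a)*(b+a) = 1 := by nlinarith [ha2, hb2]
  have hb2a : b ≤ 2*a := by nlinarith [hba, ha, hb]
  have h5 : a*b*(a+b) ≤ 4*(a^2*a) := by nlinarith [hb2a, ha, hb, hab, mul_pos ha hb]
  have h6 : (0:ℝ) < a + b := by linarith
  have h7 : b - a = 1/(a+b) := by
    rw [eq_div_iff (ne_of_gt h6)]
    linarith [hdiff]
  rw [← ha2, div_sub_div _ _ (ne_of_gt ha) (ne_of_gt hb), one_mul, mul_one, mul_div_assoc']
  rw [div_le_div_iff₀ (by positivity) (by positivity), h7]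
  have : 4 * (1/(a+b)) * (a^2*a) * (a+b) = 4*(a^2*a) := by field_simp
  nlinarith [h5, mul_pos ha hb]

theorem sum_pow32 (n : ℕ) : ∑ k ∈ Finset.Icc 1 n, 1/((k:ℝ) * Real.sqrt k) ≤ 4 := by
  have tele : ∑ k ∈ Finset.Icc 1 n, (1/Real.sqrt k - 1/Real.sqrt (k+1))
      = 1/Real.sqrt 1 - 1/Real.sqrt (n+1) := by
    rw [← Finset.Ico_add_one_right_eq_Icc, Finset.sum_Ico_eq_sum_range]
    rw [show ∀ f : ℕ → ℝ, ∑ i ∈ Finset.range (n+1-1), f i = ∑ i ∈ Finset.range n, f i from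
      fun f => by norm_num]
    have := Finset.sum_range_sub' (f := fun j => 1/Real.sqrt ((j:ℕ)+1)) (n := n)
    simpa [add_comm, add_left_comm] using this
  calc ∑ k ∈ Finset.Icc 1 n, 1/((k:ℝ) * Real.sqrt k)
      ≤ ∑ k ∈ Finset.Icc 1 n, 4 * (1/Real.sqrt k - 1/Real.sqrt (k+1)) := by
        apply Finset.sum_le_sum
        intro k hk
        exact sqrt_telescope k (Finset.mem_Icc.mp hk).1
    _ = 4 * (1/Real.sqrt 1 - 1/Real.sqrt (n+1)) := by rw [← Finset.mul_sum, tele]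
    _ ≤ 4 := by
        have h1 : (0:ℝ) ≤ 1/Real.sqrt (n+1) := by positivity
        simp only [Real.sqrt_one]
        linarith

theorem logsq_bound (n : ℕ) : ∑ p ∈ mP n, Real.log p / (p:ℝ)^2 ≤ 8 := by
  have hsub : mP n ⊆ Finset.Icc 1 n := by
    intro p hp
    have hpp : p.Prime := (mem_filter.mp hp).2
    have hpn : p ≤ n := Nat.lt_succ_iff.mp (mem_range.mp (mem_filter.mp hp).1)
    exact Finset.mem_Icc.mpr ⟨hpp.one_lt.le.trans' (by omega), hpn⟩
  calc ∑ p ∈ mP n, Real.log p / (p:ℝ)^2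
      ≤ ∑ p ∈ Finset.Icc 1 n, 2/((p:ℝ) * Real.sqrt p) := by
        apply Finset.sum_le_sum_of_subset_of_nonneg hsub ?_ |>.trans'
        · apply Finset.sum_le_sum
          intro p hp
          have hpp : p.Prime := (mem_filter.mp hp).2
          have hp1 : (1:ℝ) ≤ p := by exact_mod_cast hpp.one_lt.le
          have hs : 0 < Real.sqrt p := Real.sqrt_pos.mpr (by linarith)
          have hlog : Real.log p ≤ 2 * Real.sqrt p := by
            have h := Real.log_le_sub_one_of_pos hs
            have heq : Real.log p = Real.log (Real.sqrt p * Real.sqrt p) := by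
              rw [Real.mul_self_sqrt (by linarith)]
            rw [heq, Real.log_mul (ne_of_gt hs) (ne_of_gt hs)]
            linarith
          have hps : (p:ℝ)^2 = (p:ℝ) * Real.sqrt p * Real.sqrt p := by
            nlinarith [Real.sq_sqrt (by linarith : (0:ℝ) ≤ (p:ℝ))]
          rw [div_le_div_iff₀ (by positivity) (by positivity), hps]
          nlinarith [hs, hlog, mul_pos (by positivity : (0:ℝ) < (p:ℝ)) hs]
        · intro p hp _
          have hp1 : 1 ≤ p := (Finset.mem_Icc.mp hp).1
          have : (0:ℝ) < p := by exact_mod_cast hp1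
          positivity
    _ = 2 * ∑ p ∈ Finset.Icc 1 n, 1/((p:ℝ) * Real.sqrt p) := by
        rw [Finset.mul_sum]
        exact Finset.sum_congr rfl fun p _ => by ring
    _ ≤ 8 := by linarith [sum_pow32 n]

noncomputable def mL (n : ℕ) : ℝ := ∑ p ∈ mP n, Real.log p / p

theorem mertens1 (n : ℕ) (hn : 2 ≤ n) : |mL n - Real.log n| ≤ 19 := by
  have hn0 : (0:ℝ) < n := by exact_mod_cast (by omega : 0 < n)
  have hlog_nonneg : ∀ p ∈ mP n, 0 ≤ Real.log p := by
    intro p hp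
    have hpp : p.Prime := (mem_filter.mp hp).2
    exact Real.log_nonneg (by exact_mod_cast hpp.one_lt.le)
  have hL_id : ∑ p ∈ mP n, ((n:ℝ)/p) * Real.log p = n * mL n := by
    rw [mL, Finset.mul_sum]
    refine Finset.sum_congr rfl fun p hp => ?_
    have hpp : p.Prime := (mem_filter.mp hp).2
    have : (0:ℝ) < p := by exact_mod_cast hpp.pos
    field_simp
  -- upper bound
  have hupper : mL n ≤ Real.log n + Real.log 4 := by
    have h1 : ∑ p ∈ mP n, ((n:ℝ)/p - 1) * Real.log p ≤ Real.log n.factorial := by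
      rw [mLegendre]
      apply Finset.sum_le_sum
      intro p hp
      exact mul_le_mul_of_nonneg_right (mV_lower n p hp) (hlog_nonneg p hp)
    have h2 : ∑ p ∈ mP n, ((n:ℝ)/p - 1) * Real.log p
        = n * mL n - ∑ p ∈ mP n, Real.log p := by
      rw [← hL_id, ← Finset.sum_sub_distrib]
      exact Finset.sum_congr rfl fun p hp => by ring
    have h3 : n * mL n ≤ n * Real.log n + n * Real.log 4 := by
      have := mTheta_le n
      have := log_factorial_le n
      linarith [h1, h2.symm.le, h2.le]
    have := (mul_le_mul_iff_of_pos_left hn0).mp (by linarith [h3] : n * mL n ≤ n * (Real.log n + Real.log 4))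
    linarith [this]
  -- lower bound
  have hlower : Real.log n - 17 ≤ mL n := by
    have h1 : Real.log n.factorial ≤ ∑ p ∈ mP n, ((n:ℝ)/p + 2*n/(p:ℝ)^2) * Real.log p := by
      rw [mLegendre]
      apply Finset.sum_le_sum
      intro p hp
      exact mul_le_mul_of_nonneg_right (mV_upper n p (mem_filter.mp hp).2) (hlog_nonneg p hp)
    have h2 : ∑ p ∈ mP n, ((n:ℝ)/p + 2*n/(p:ℝ)^2) * Real.log p
        = n * mL n + 2*n * ∑ p ∈ mP n, Real.log p / (p:ℝ)^2 := by
      rw [← hL_id, Finset.mul_sum, ← Finset.sum_add_distrib]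
      refine Finset.sum_congr rfl fun p hp => ?_
      have hpp : p.Prime := (mem_filter.mp hp).2
      have : (0:ℝ) < p := by exact_mod_cast hpp.pos
      field_simp
    have h3 : n * Real.log n - n + 1 ≤ Real.log n.factorial := le_log_factorial n (by omega)
    have h4 : Real.log n.factorial ≤ n * mL n + 16 * n := by
      have := logsq_bound n
      nlinarith [h1, h2, hn0]
    have h5 : n * (Real.log n - 17) ≤ n * mL n := by nlinarith [h3, h4]
    exact (mul_le_mul_iff_of_pos_left hn0).mp h5
  have hlog4 : Real.log 4 ≤ 2 := by
    have h2 : Real.log 2 ≤ 1 := by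
      nlinarith [Real.log_le_sub_one_of_pos (by norm_num : (0:ℝ) < 2)]
    have : Real.log 4 = Real.log 2 + Real.log 2 := by
      rw [show (4:ℝ) = 2*2 by norm_num, Real.log_mul (by norm_num) (by norm_num)]
    linarith
  rw [abs_le]
  constructor <;> linarith

noncomputable def mS (n : ℕ) : ℝ := ∑ p ∈ mP n, 1/(p:ℝ)

theorem mP_succ_sum (n : ℕ) (f : ℕ → ℝ) :
    ∑ p ∈ mP (n+1), f p = ∑ p ∈ mP n, f p + if (n+1).Prime then f (n+1) else 0 := by
  rw [mP, mP, Finset.sum_filter, Finset.sum_filter, Finset.sum_range_succ]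

theorem log_pos_of_two_le {k : ℕ} (hk : 2 ≤ k) : 0 < Real.log k := by
  apply Real.log_pos
  exact_mod_cast hk

theorem mAbel (n : ℕ) (hn : 2 ≤ n) :
    mS n = mL n / Real.log n
      + ∑ k ∈ Finset.Ico 2 n, mL k * (1/Real.log k - 1/Real.log (k+1)) := by
  induction n, hn using Nat.le_induction with
  | base =>
    simp only [Finset.Ico_self, Finset.sum_empty, add_zero]
    have h2 : mP 2 = {2} := by decide
    rw [mS, mL, h2]
    simp only [Finset.sum_singleton]
    have : Real.log 2 ≠ 0 := ne_of_gt (log_pos_of_two_le le_rfl)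
    push_cast
    field_simp
  | succ n hn ih =>
    have hlogn : Real.log n ≠ 0 := ne_of_gt (log_pos_of_two_le hn)
    have hlogn1 : Real.log ((n:ℝ)+1) ≠ 0 := by
      have : 0 < Real.log ((n+1:ℕ):ℝ) := log_pos_of_two_le (by omega)
      push_cast at this
      exact ne_of_gt this
    have hS : mS (n+1) = mS n + (if (n+1).Prime then 1/((n+1:ℕ):ℝ) else 0) :=
      mP_succ_sum n _
    have hL : mL (n+1) = mL n + (if (n+1).Prime then Real.log ((n+1:ℕ):ℝ) / ((n+1:ℕ):ℝ) else 0) :=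
      mP_succ_sum n _
    set d : ℝ := if (n+1).Prime then 1/((n+1:ℕ):ℝ) else 0 with hd
    have hifL : (if (n+1).Prime then Real.log ((n+1:ℕ):ℝ) / ((n+1:ℕ):ℝ) else 0)
        = Real.log ((n+1:ℕ):ℝ) * d := by
      rw [hd]; split
      · ring
      · ring
    rw [Finset.sum_Ico_succ_top (by omega : 2 ≤ n), hS, hL, ih, hifL]
    have hcast : ((n+1:ℕ):ℝ) = (n:ℝ)+1 := by push_cast; ring
    rw [hcast]
    field_simp
    ring

noncomputable def mG (k : ℕ) : ℝ := 1/Real.log k - 1/Real.log (k+1)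
noncomputable def mT (k : ℕ) : ℝ := Real.log (Real.log (k+1)) - Real.log (Real.log k)
noncomputable def mE (k : ℕ) : ℝ := mL k * mG k - mT k

theorem mG_nonneg {k : ℕ} (hk : 2 ≤ k) : 0 ≤ mG k := by
  have h1 : 0 < Real.log k := log_pos_of_two_le hk
  have h2 : Real.log k ≤ Real.log ((k:ℝ)+1) := by
    apply Real.log_le_log (by positivity)
    linarith
  rw [mG, sub_nonneg]
  push_cast
  apply one_div_le_one_div_of_le h1 h2

theorem mE_bound {k : ℕ} (hk : 2 ≤ k) : |mE k| ≤ 20 * mG k := by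
  have hx : 0 < Real.log k := log_pos_of_two_le hk
  have hk1 : (1:ℝ) ≤ k := by exact_mod_cast (by omega : 1 ≤ k)
  have hxy : Real.log k < Real.log ((k:ℝ)+1) := by
    apply Real.log_lt_log (by linarith)
    linarith
  set x := Real.log k with hxd
  set y := Real.log ((k:ℝ)+1) with hyd
  have hy : 0 < y := lt_trans hx hxy
  have hyx1 : y - x ≤ 1 := by
    have : y - x = Real.log (((k:ℝ)+1)/k) := by
      rw [Real.log_div (by linarith) (by linarith)]
    rw [this]
    have := Real.log_le_sub_one_of_pos (x := ((k:ℝ)+1)/k) (by positivity)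
    have h2 : ((k:ℝ)+1)/k - 1 = 1/k := by field_simp; ring
    have h3 : (1:ℝ)/k ≤ 1 := by
      rw [div_le_one (by linarith)]; exact hk1
    linarith
  have hgG : mG k = (y - x)/(x*y) := by
    rw [mG, hxd, hyd]
    push_cast
    have h1' : Real.log (k:ℝ) ≠ 0 := ne_of_gt hx
    have h2' : Real.log ((k:ℝ)+1) ≠ 0 := ne_of_gt hy
    rw [div_sub_div _ _ h1' h2']; ring
  have htT : mT k = Real.log (y/x) := by
    rw [mT, Real.log_div (ne_of_gt hy) (ne_of_gt hx)]
  have hu : 0 < y/x := by positivity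
  have hub : Real.log (y/x) ≤ y/x - 1 := Real.log_le_sub_one_of_pos hu
  have hlb : 1 - x/y ≤ Real.log (y/x) := by
    have := Real.one_sub_inv_le_log_of_pos hu
    have hinv : (y/x)⁻¹ = x/y := by
      rw [inv_div]
    rw [hinv] at this
    exact this
  -- |x * mG k - mT k| ≤ mG k
  have hmid : |x * mG k - mT k| ≤ mG k := by
    rw [hgG, htT, abs_le]
    have hxg : x * ((y-x)/(x*y)) = 1 - x/y := by field_simp
    rw [hxg]
    have hG' : (0:ℝ) ≤ (y-x)/(x*y) := div_nonneg (by linarith) (by positivity)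
    have h5 : (y/x - 1) - (1 - x/y) = (y-x)^2/(x*y) := by field_simp
    have h6 : (y-x)^2/(x*y) ≤ (y-x)/(x*y) := by
      apply div_le_div_of_nonneg_right ?_ (by positivity) |>.trans_eq rfl
      nlinarith [hyx1, hxy]
    constructor
    · nlinarith [hub, h5, h6]
    · linarith [hlb, hG']
  have hR : |mL k - x| ≤ 19 := mertens1 k hk
  have hG0 : 0 ≤ mG k := mG_nonneg hk
  have : mE k = (mL k - x) * mG k + (x * mG k - mT k) := by rw [mE]; ring
  rw [this]
  calc |(mL k - x) * mG k + (x * mG k - mT k)|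
      ≤ |(mL k - x) * mG k| + |x * mG k - mT k| := abs_add_le _ _
    _ ≤ 19 * mG k + mG k := by
        have habs : |(mL k - x) * mG k| ≤ 19 * mG k := by
          rw [abs_mul, abs_of_nonneg hG0]
          exact mul_le_mul_of_nonneg_right hR hG0
        linarith [habs, hmid]
    _ = 20 * mG k := by ring

theorem mG_tele (c m : ℕ) (hc : 2 ≤ c) :
    ∑ j ∈ Finset.range m, mG (j + c) = 1/Real.log c - 1/Real.log (m + c) := by
  have h := Finset.sum_range_sub' (f := fun j => 1/Real.log ((j + c : ℕ) : ℝ)) (n := m)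
  rw [show (1:ℝ)/Real.log c - 1/Real.log ((m:ℝ) + c)
      = 1/Real.log ((0 + c : ℕ) : ℝ) - 1/Real.log ((m + c : ℕ) : ℝ) by push_cast; norm_num,
    ← h]
  refine Finset.sum_congr rfl fun j _ => ?_
  rw [mG]
  have h2 : ((j + c : ℕ) : ℝ) + 1 = ((j + 1 + c : ℕ) : ℝ) := by push_cast; ring
  rw [h2]

theorem mT_tele (n : ℕ) (hn : 2 ≤ n) :
    ∑ k ∈ Finset.Ico 2 n, mT k
      = Real.log (Real.log n) - Real.log (Real.log 2) := by
  rw [Finset.sum_Ico_eq_sum_range]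
  have h := Finset.sum_range_sub (f := fun j => Real.log (Real.log ((j + 2 : ℕ) : ℝ))) (n := n - 2)
  have hn2 : n - 2 + 2 = n := by omega
  rw [hn2] at h
  rw [show Real.log (Real.log (n:ℝ)) - Real.log (Real.log 2)
      = Real.log (Real.log (n:ℝ)) - Real.log (Real.log ((0 + 2 : ℕ) : ℝ)) by norm_num,
    ← h]
  refine Finset.sum_congr rfl fun j _ => ?_
  rw [mT]
  have h1 : ((2 + j : ℕ) : ℝ) = ((j + 2 : ℕ) : ℝ) := by push_cast; ring
  have h2 : ((j + 2 : ℕ) : ℝ) + 1 = ((j + 1 + 2 : ℕ) : ℝ) := by push_cast; ring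
  rw [h1, h2]

theorem mE_summable : Summable (fun j => mE (j + 2)) := by
  apply Summable.of_norm_bounded (g := fun j => 20 * mG (j + 2)) ?_ ?_
  · apply Summable.mul_left
    apply summable_of_sum_range_le (c := 1/Real.log 2)
    · intro j; exact mG_nonneg (by omega)
    · intro m
      rw [mG_tele 2 m (le_refl 2)]
      have h1 : 0 < Real.log ((m:ℝ) + 2) := by
        have : 0 < Real.log ((m + 2 : ℕ):ℝ) := log_pos_of_two_le (by omega)
        push_cast at this
        exact this
      have : 0 ≤ 1/Real.log ((m:ℝ) + 2) := by positivity
      push_cast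
      linarith
  · intro j
    rw [Real.norm_eq_abs]
    exact mE_bound (by omega)

noncomputable def mB' : ℝ := ∑' j, mE (j + 2)

theorem mE_tail (n : ℕ) (hn : 2 ≤ n) :
    |mB' - ∑ k ∈ Finset.Ico 2 n, mE k| ≤ 20 / Real.log n := by
  have hlog : 0 < Real.log n := log_pos_of_two_le hn
  have hF : ∑ k ∈ Finset.Ico 2 n, mE k = ∑ j ∈ Finset.range (n-2), mE (j + 2) := by
    rw [Finset.sum_Ico_eq_sum_range]
    refine Finset.sum_congr rfl fun j _ => by rw [add_comm]
  have hsplit := Summable.sum_add_tsum_nat_add (n - 2) mE_summable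
  rw [hF, mB', ← hsplit]
  rw [show ∑ i ∈ Finset.range (n-2), mE (i+2) + ∑' (i : ℕ), mE (i + (n-2) + 2)
      - ∑ j ∈ Finset.range (n-2), mE (j+2) = ∑' (i : ℕ), mE (i + (n-2) + 2) by ring]
  have hidx : ∀ i : ℕ, i + (n-2) + 2 = i + n := by omega
  calc |∑' (i : ℕ), mE (i + (n-2) + 2)| ≤ ∑' (i : ℕ), ‖mE (i + (n-2) + 2)‖ := by
        rw [← Real.norm_eq_abs]
        apply norm_tsum_le_tsum_norm
        have := (mE_summable.comp_injective (add_left_injective (n-2))).norm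
        simpa using this
    _ ≤ 20 / Real.log n := by
        apply Real.tsum_le_of_sum_range_le (fun i => norm_nonneg _)
        intro m
        calc ∑ i ∈ Finset.range m, ‖mE (i + (n-2) + 2)‖
            ≤ ∑ i ∈ Finset.range m, 20 * mG (i + n) := by
              apply Finset.sum_le_sum
              intro i _
              rw [Real.norm_eq_abs, hidx i]
              exact mE_bound (by omega)
          _ = 20 * (1/Real.log n - 1/Real.log ((m:ℝ) + n)) := by
              rw [← Finset.mul_sum, mG_tele n m hn]
          _ ≤ 20 / Real.log n := by
              have h1 : 0 < Real.log ((m:ℝ) + n) := by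
                have : 0 < Real.log ((m + n : ℕ):ℝ) := log_pos_of_two_le (by omega)
                push_cast at this
                exact this
              have : 0 ≤ 1/Real.log ((m:ℝ) + n) := by positivity
              rw [mul_sub]
              rw [show (20:ℝ) * (1/Real.log n) = 20/Real.log n by ring]
              linarith

theorem mertens2_nat (n : ℕ) (hn : 2 ≤ n) :
    |mS n - Real.log (Real.log n) - (1 - Real.log (Real.log 2) + mB')| ≤ 39 / Real.log n := by
  have hlog : 0 < Real.log n := log_pos_of_two_le hn
  have habel := mAbel n hn
  have hLG : ∀ k ∈ Finset.Ico 2 n, mL k * (1/Real.log k - 1/Real.log (k+1)) = mE k + mT k := by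
    intro k hk
    rw [mE, mG]
    push_cast
    ring
  rw [Finset.sum_congr rfl hLG, Finset.sum_add_distrib, mT_tele n hn] at habel
  have hLn : mL n / Real.log n = 1 + (mL n - Real.log n)/Real.log n := by
    field_simp
    ring
  have hR := mertens1 n hn
  have htail := mE_tail n hn
  have key : mS n - Real.log (Real.log n) - (1 - Real.log (Real.log 2) + mB')
      = (mL n - Real.log n)/Real.log n - (mB' - ∑ k ∈ Finset.Ico 2 n, mE k) := by
    rw [habel, hLn]
    ring
  rw [key]
  have hRdiv : |(mL n - Real.log n)/Real.log n| ≤ 19/Real.log n := by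
    rw [abs_div, abs_of_pos hlog]
    gcongr
  calc |(mL n - Real.log n)/Real.log n - (mB' - ∑ k ∈ Finset.Ico 2 n, mE k)|
      ≤ |(mL n - Real.log n)/Real.log n| + |mB' - ∑ k ∈ Finset.Ico 2 n, mE k| := abs_sub _ _
    _ ≤ 19/Real.log n + 20/Real.log n := by linarith [hRdiv, htail]
    _ = 39 / Real.log n := by ring

/-- Mertens' second theorem: there is a constant `B` such that
`∑_{p ≤ x, p prime} 1/p = log log x + B + O(1/log x)` as `x → ∞`. -/
theorem mertens_second :
    ∃ B C x₀ : ℝ, ∀ x : ℝ, x₀ ≤ x →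
      |(∑ p ∈ (Finset.range (⌊x⌋₊ + 1)).filter Nat.Prime, (1 : ℝ) / p)
          - Real.log (Real.log x) - B| ≤ C / Real.log x := by
  refine ⟨1 - Real.log (Real.log 2) + mB', 100, 3, fun x hx => ?_⟩
  set n := ⌊x⌋₊ with hn_def
  have hx0 : (0:ℝ) < x := by linarith
  have hn3 : 3 ≤ n := by
    rw [hn_def]
    exact Nat.le_floor (by exact_mod_cast hx)
  have hn2 : 2 ≤ n := by omega
  have hnx : (n:ℝ) ≤ x := Nat.floor_le hx0.le
  have hxn1 : x < n + 1 := Nat.lt_floor_add_one x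
  have hnr : (3:ℝ) ≤ n := by exact_mod_cast hn3
  have hlogn : 0 < Real.log n := log_pos_of_two_le hn2
  have hlogx : 0 < Real.log x := Real.log_pos (by linarith)
  have hlognx : Real.log n ≤ Real.log x := Real.log_le_log (by linarith) hnx
  -- log x ≤ 2 log n
  have hlog2 : Real.log x ≤ 2 * Real.log n := by
    have h1 : x ≤ (n:ℝ)^2 := by nlinarith
    calc Real.log x ≤ Real.log ((n:ℝ)^2) := Real.log_le_log hx0 h1
      _ = 2 * Real.log n := by rw [Real.log_pow]; push_cast; ring
  have hinv : 1/Real.log n ≤ 2/Real.log x := by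
    rw [div_le_div_iff₀ hlogn hlogx]
    linarith
  -- |log log x - log log n| ≤ 1/log n
  have hll : |Real.log (Real.log x) - Real.log (Real.log n)| ≤ 1/Real.log n := by
    have h0 : 0 ≤ Real.log (Real.log x) - Real.log (Real.log n) := by
      have := Real.log_le_log hlogn hlognx
      linarith
    rw [abs_of_nonneg h0]
    have h1 : Real.log (Real.log x) - Real.log (Real.log n)
        = Real.log (Real.log x / Real.log n) := by
      rw [Real.log_div (ne_of_gt hlogx) (ne_of_gt hlogn)]
    rw [h1]
    have h2 := Real.log_le_sub_one_of_pos (x := Real.log x / Real.log n) (by positivity)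
    have h3 : Real.log x / Real.log n - 1 = (Real.log x - Real.log n)/Real.log n := by
      field_simp
    have h4 : Real.log x - Real.log n ≤ 1 := by
      have h5 : Real.log x ≤ Real.log ((n:ℝ)+1) := Real.log_le_log hx0 (by linarith)
      have h6 : Real.log ((n:ℝ)+1) - Real.log n = Real.log (((n:ℝ)+1)/n) := by
        rw [Real.log_div (by positivity) (by positivity)]
      have h7 := Real.log_le_sub_one_of_pos (x := ((n:ℝ)+1)/n) (by positivity)
      have h8 : ((n:ℝ)+1)/n - 1 = 1/n := by field_simp; ring
      have h9 : (1:ℝ)/n ≤ 1 := by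
        rw [div_le_one (by linarith)]; linarith
      linarith
    have h10 : (Real.log x - Real.log n)/Real.log n ≤ 1/Real.log n := by
      gcongr
    linarith
  have hmain := mertens2_nat n hn2
  have hsum : mS n = ∑ p ∈ (Finset.range (⌊x⌋₊ + 1)).filter Nat.Prime, (1 : ℝ) / p := by
    rw [mS, mP, hn_def]
  have h39 : (39:ℝ)/Real.log n ≤ 78/Real.log x := by
    rw [div_le_div_iff₀ hlogn hlogx]
    linarith
  have h1ln : 1/Real.log n ≤ 2/Real.log x := hinv
  calc |(∑ p ∈ (Finset.range (⌊x⌋₊ + 1)).filter Nat.Prime, (1 : ℝ) / p)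
          - Real.log (Real.log x) - (1 - Real.log (Real.log 2) + mB')|
      = |(mS n - Real.log (Real.log n) - (1 - Real.log (Real.log 2) + mB'))
          - (Real.log (Real.log x) - Real.log (Real.log n))| := by
        rw [← hsum]; congr 1; ring
    _ ≤ |mS n - Real.log (Real.log n) - (1 - Real.log (Real.log 2) + mB')|
          + |Real.log (Real.log x) - Real.log (Real.log n)| := abs_sub _ _
    _ ≤ 39/Real.log n + 1/Real.log n := by linarith [hmain, hll]
    _ ≤ 78/Real.log x + 2/Real.log x := by linarith [h39, h1ln]
    _ ≤ 100 / Real.log x := by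
        rw [← add_div]
        gcongr
        norm_num
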